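/- arXiv:1812.03760 — 4 statements merged into one kernel-verified Lean document; each statement's English description precedes it below -/
import Mathlib

section
/- Let X, Y be compact metric spaces with compact subsets A ⊆ X, B ⊆ Y, and let ε ≥ 0. The infimum over all metric spaces Z and isometric embeddings f : X → Z, g : Y → Z of max( d_H(f(X), g(Y)), d_H(f(A), g(B)) ) is at most ε if and only if there exists a correspondence R between X and Y with dis(R) ≤ 2ε such that every point of A R-corresponds to some point of B and every point of B R-corresponds to some point of A. -/
/-! Isometric embeddings `f, g` into a common space with both Hausdorff distances at most `c` yield
the correspondence `{(x, y) | d(f x, g y) ≤ c}`, of distortion at most `2c` by the triangle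
inequality. Conversely, a correspondence of distortion at most `2c` is realised in the metric
on `X ⊕ Y` glued along it with gap `c`. Since the infimum need not be attained, the forward
direction takes correspondences for a sequence of costs decreasing to the infimum and passes to
their limit along an ultrafilter, which by compactness is again a correspondence with the
`A`–`B` property and distortion at most twice the infimum. -/

open Metric Set Filter Topology

section Correspondence

variable {X Y : Type*}

def IsCorrespondenceBetween (R : Set (X × Y)) (s : Set X) (t : Set Y) : Prop :=
  (∀ a ∈ s, ∃ b ∈ t, (a, b) ∈ R) ∧ ∀ b ∈ t, ∃ a ∈ s, (a, b) ∈ R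

theorem isCorrespondenceBetween_univ_iff {R : Set (X × Y)} :
    IsCorrespondenceBetween R univ univ ↔ (∀ x, ∃ y, (x, y) ∈ R) ∧ ∀ y, ∃ x, (x, y) ∈ R := by
  simp [IsCorrespondenceBetween]

def DistortionLE [PseudoMetricSpace X] [PseudoMetricSpace Y] (R : Set (X × Y)) (c : ℝ) : Prop :=
  ∀ p ∈ R, ∀ q ∈ R, |dist p.1 q.1 - dist p.2 q.2| ≤ c

theorem IsCorrespondenceBetween.hausdorffDist_image_le {Z : Type*} [PseudoMetricSpace Z]
    {f : X → Z} {g : Y → Z} {R : Set (X × Y)} {s : Set X}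
    {t : Set Y} {c : ℝ} (hR : IsCorrespondenceBetween R s t) (hc : 0 ≤ c)
    (hfg : ∀ p ∈ R, dist (f p.1) (g p.2) ≤ c) : hausdorffDist (f '' s) (g '' t) ≤ c := by
  apply hausdorffDist_le_of_mem_dist hc
  · rintro _ ⟨a, ha, rfl⟩
    obtain ⟨b, hb, hab⟩ := hR.1 a ha
    exact ⟨g b, mem_image_of_mem g hb, hfg _ hab⟩
  · rintro _ ⟨b, hb, rfl⟩
    obtain ⟨a, ha, hab⟩ := hR.2 b hb
    exact ⟨f a, mem_image_of_mem f ha, dist_comm (f a) (g b) ▸ hfg _ hab⟩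

theorem DistortionLE.mono [PseudoMetricSpace X] [PseudoMetricSpace Y] {R : Set (X × Y)}
    {c c' : ℝ} (h : DistortionLE R c) (hc : c ≤ c') : DistortionLE R c' :=
  fun p hp q hq => (h p hp q hq).trans hc

end Correspondence

section Embeddings

variable {X Y Z : Type*} [PseudoMetricSpace X] [PseudoMetricSpace Y] [PseudoMetricSpace Z]
  {f : X → Z} {g : Y → Z}

theorem IsCompact.exists_dist_le_of_hausdorffDist_le {s t : Set Z} {x : Z} {c : ℝ}
    (ht : IsCompact t) (hne : t.Nonempty) (hfin : hausdorffEDist s t ≠ ⊤) (hx : x ∈ s)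
    (h : hausdorffDist s t ≤ c) : ∃ y ∈ t, dist x y ≤ c := by
  obtain ⟨y, hy, hxy⟩ := ht.exists_infDist_eq_dist hne x
  exact ⟨y, hy, hxy ▸ (infDist_le_hausdorffDist_of_mem hx hfin).trans h⟩

theorem isCorrespondenceBetween_of_hausdorffDist_image_le (hf : Continuous f) (hg : Continuous g)
    {s : Set X} {t : Set Y} (hs : IsCompact s) (ht : IsCompact t) (hs' : s.Nonempty)
    (ht' : t.Nonempty) {c : ℝ} (h : hausdorffDist (f '' s) (g '' t) ≤ c) :
    IsCorrespondenceBetween {p : X × Y | dist (f p.1) (g p.2) ≤ c} s t := by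
  have hfin : hausdorffEDist (f '' s) (g '' t) ≠ ⊤ :=
    hausdorffEDist_ne_top_of_nonempty_of_bounded (hs'.image f) (ht'.image g)
      (hs.image hf).isBounded (ht.image hg).isBounded
  constructor
  · intro a ha
    obtain ⟨_, ⟨b, hb, rfl⟩, hab⟩ := (ht.image hg).exists_dist_le_of_hausdorffDist_le
      (ht'.image g) hfin (mem_image_of_mem f ha) h
    exact ⟨b, hb, hab⟩
  · intro b hb
    rw [hausdorffEDist_comm] at hfin
    rw [hausdorffDist_comm] at h
    obtain ⟨_, ⟨a, ha, rfl⟩, hab⟩ := (hs.image hf).exists_dist_le_of_hausdorffDist_le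
      (hs'.image f) hfin (mem_image_of_mem g hb) h
    exact ⟨a, ha, show dist (f a) (g b) ≤ c by rwa [dist_comm]⟩

theorem distortionLE_setOf_dist_le (hf : Isometry f) (hg : Isometry g) (c : ℝ) :
    DistortionLE {p : X × Y | dist (f p.1) (g p.2) ≤ c} (2 * c) := by
  rintro ⟨x, y⟩ (hxy : dist (f x) (g y) ≤ c) ⟨x', y'⟩ (hxy' : dist (f x') (g y') ≤ c)
  rw [← hf.dist_eq, ← hg.dist_eq, abs_sub_le_iff]
  have hX := dist_triangle4 (f x) (g y) (g y') (f x')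
  have hY := dist_triangle4 (g y) (f x) (f x') (g y')
  rw [dist_comm (g y') (f x')] at hX
  rw [dist_comm (g y) (f x)] at hY
  constructor <;> linarith

end Embeddings

theorem exists_isometry_dist_le_of_distortionLE {X Y : Type} [MetricSpace X] [MetricSpace Y]
    {R : Set (X × Y)} (hR : R.Nonempty) {c : ℝ} (hc : 0 < c) (hdis : DistortionLE R (2 * c)) :
    ∃ (Z : Type) (_ : MetricSpace Z) (f : X → Z) (g : Y → Z),
      Isometry f ∧ Isometry g ∧ ∀ p ∈ R, dist (f p.1) (g p.2) ≤ c := by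
  have : Nonempty R := hR.to_subtype
  let Φ : R → X := fun p => p.1.1
  let Ψ : R → Y := fun p => p.1.2
  let _ : MetricSpace (X ⊕ Y) := glueMetricApprox Φ Ψ c hc fun p q => hdis _ p.2 _ q.2
  exact ⟨X ⊕ Y, inferInstance, Sum.inl, Sum.inr, Isometry.of_dist_eq fun _ _ => rfl,
    Isometry.of_dist_eq fun _ _ => rfl, fun p hp => (glueDist_glued_points Φ Ψ c ⟨p, hp⟩).le⟩

section UltrafilterLimit

variable {ι α X Y : Type*} [TopologicalSpace α] {U : Ultrafilter ι}

def ultrafilterLimit (U : Ultrafilter ι) (S : ι → Set α) : Set α :=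
  {p | ∃ u : ι → α, (∀ i, u i ∈ S i) ∧ Tendsto u U (𝓝 p)}

theorem IsCompact.exists_tendsto_ultrafilter {t : Set α} (ht : IsCompact t) (U : Ultrafilter ι)
    {u : ι → α} (hu : ∀ i, u i ∈ t) : ∃ y ∈ t, Tendsto u U (𝓝 y) :=
  ht.ultrafilter_le_nhds (U.map u) (tendsto_principal.2 (Eventually.of_forall hu))

theorem IsCorrespondenceBetween.ultrafilterLimit [TopologicalSpace X] [TopologicalSpace Y]
    {R : ι → Set (X × Y)} {s : Set X} {t : Set Y} (hs : IsCompact s) (ht : IsCompact t)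
    (hR : ∀ i, IsCorrespondenceBetween (R i) s t) :
    IsCorrespondenceBetween (ultrafilterLimit U R) s t := by
  constructor
  · intro a ha
    choose b hbt hb using fun i => (hR i).1 a ha
    obtain ⟨b₀, hb₀, hlim⟩ := ht.exists_tendsto_ultrafilter U hbt
    exact ⟨b₀, hb₀, fun i => (a, b i), hb, tendsto_const_nhds.prodMk_nhds hlim⟩
  · intro b hb
    choose a has ha using fun i => (hR i).2 b hb
    obtain ⟨a₀, ha₀, hlim⟩ := hs.exists_tendsto_ultrafilter U has
    exact ⟨a₀, ha₀, fun i => (a i, b), ha, hlim.prodMk_nhds tendsto_const_nhds⟩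

theorem DistortionLE.ultrafilterLimit [PseudoMetricSpace X] [PseudoMetricSpace Y]
    {R : ι → Set (X × Y)} {c : ι → ℝ} {c₀ : ℝ} (hc : Tendsto c U (𝓝 c₀))
    (hR : ∀ i, DistortionLE (R i) (c i)) : DistortionLE (ultrafilterLimit U R) c₀ := by
  rintro p ⟨u, hu, hup⟩ q ⟨v, hv, hvq⟩
  have hX := hup.fst_nhds.dist hvq.fst_nhds
  have hY := hup.snd_nhds.dist hvq.snd_nhds
  exact le_of_tendsto_of_tendsto' (hX.sub hY).abs hc fun i => hR i _ (hu i) _ (hv i)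

end UltrafilterLimit

section EmbeddingCosts

variable {X Y : Type} [MetricSpace X] [MetricSpace Y] {A : Set X} {B : Set Y}

def embeddingCosts (A : Set X) (B : Set Y) : Set ℝ :=
  {r : ℝ | ∃ (Z : Type) (_ : MetricSpace Z) (f : X → Z) (g : Y → Z),
    Isometry f ∧ Isometry g ∧
    max (hausdorffDist (range f) (range g)) (hausdorffDist (f '' A) (g '' B)) = r}

theorem bddBelow_embeddingCosts : BddBelow (embeddingCosts A B) := by
  refine ⟨0, ?_⟩
  rintro r ⟨Z, _, f, g, -, -, rfl⟩
  exact hausdorffDist_nonneg.trans (le_max_left _ _)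

theorem embeddingCosts_nonempty [CompactSpace X] [CompactSpace Y] :
    (embeddingCosts A B).Nonempty :=
  ⟨_, lp (fun _ : ℕ => ℝ) ⊤, inferInstance, kuratowskiEmbedding X, kuratowskiEmbedding Y,
    kuratowskiEmbedding.isometry X, kuratowskiEmbedding.isometry Y, rfl⟩

theorem csInf_embeddingCosts_le [Nonempty X] {R : Set (X × Y)}
    (hR : IsCorrespondenceBetween R univ univ) (hAB : IsCorrespondenceBetween R A B) {c : ℝ}
    (hc : 0 < c) (hdis : DistortionLE R (2 * c)) : sInf (embeddingCosts A B) ≤ c := by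
  obtain ⟨y, -, hxy⟩ := hR.1 (Classical.arbitrary X) trivial
  obtain ⟨Z, _, f, g, hf, hg, hfg⟩ := exists_isometry_dist_le_of_distortionLE ⟨_, hxy⟩ hc hdis
  have hcosts : max (hausdorffDist (range f) (range g)) (hausdorffDist (f '' A) (g '' B)) ≤ c := by
    rw [← image_univ, ← image_univ]
    exact max_le (hR.hausdorffDist_image_le hc.le hfg) (hAB.hausdorffDist_image_le hc.le hfg)
  exact (csInf_le bddBelow_embeddingCosts ⟨Z, _, f, g, hf, hg, rfl⟩).trans hcosts

theorem exists_correspondence_of_mem_embeddingCosts [CompactSpace X] [CompactSpace Y]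
    (hA : IsCompact A) (hB : IsCompact B) (hAne : A.Nonempty) (hBne : B.Nonempty) {r : ℝ}
    (hr : r ∈ embeddingCosts A B) :
    ∃ R : Set (X × Y), IsCorrespondenceBetween R univ univ ∧ DistortionLE R (2 * r) ∧
      IsCorrespondenceBetween R A B := by
  obtain ⟨Z, _, f, g, hf, hg, rfl⟩ := hr
  refine ⟨_, ?_, distortionLE_setOf_dist_le hf hg _, ?_⟩
  · refine isCorrespondenceBetween_of_hausdorffDist_image_le hf.continuous hg.continuous
      isCompact_univ isCompact_univ (hAne.mono (subset_univ A))
      (hBne.mono (subset_univ B)) ?_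
    rw [image_univ, image_univ]
    exact le_max_left _ _
  · exact isCorrespondenceBetween_of_hausdorffDist_image_le hf.continuous hg.continuous
      hA hB hAne hBne (le_max_right _ _)

theorem exists_correspondence_distortionLE_two_mul_sInf [CompactSpace X] [CompactSpace Y]
    (hA : IsCompact A) (hB : IsCompact B) (hAne : A.Nonempty) (hBne : B.Nonempty) :
    ∃ R : Set (X × Y), IsCorrespondenceBetween R univ univ ∧
      DistortionLE R (2 * sInf (embeddingCosts A B)) ∧ IsCorrespondenceBetween R A B := by
  obtain ⟨r, -, hr_lim, hr_mem⟩ := exists_seq_tendsto_sInf (embeddingCosts_nonempty (A := A) (B := B))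
    bddBelow_embeddingCosts
  choose R hR hdis hAB using fun n =>
    exists_correspondence_of_mem_embeddingCosts hA hB hAne hBne (hr_mem n)
  let U : Ultrafilter ℕ := Ultrafilter.of atTop
  refine ⟨ultrafilterLimit U R, .ultrafilterLimit isCompact_univ isCompact_univ hR,
    .ultrafilterLimit ((hr_lim.const_mul 2).mono_left (Ultrafilter.of_le _)) hdis,
    .ultrafilterLimit hA hB hAB⟩

end EmbeddingCosts

/-- Strassen-type characterization for compact metric spaces equipped with a distinguished
compact subset: the infimum over ambient spaces of `max(d_H(f(X), g(Y)), d_H(f(A), g(B)))`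
is at most `ε` iff there is a correspondence `R` with distortion at most `2ε` under which
every point of `A` corresponds to a point of `B` and vice versa. -/
theorem stmt_10 (X Y : Type) [MetricSpace X] [CompactSpace X] [MetricSpace Y] [CompactSpace Y]
    (A : Set X) (B : Set Y) (hA : IsCompact A) (hB : IsCompact B)
    (hAne : A.Nonempty) (hBne : B.Nonempty) (ε : ℝ) (hε : 0 ≤ ε) :
    sInf {r : ℝ | ∃ (Z : Type) (_ : MetricSpace Z) (f : X → Z) (g : Y → Z),
        Isometry f ∧ Isometry g ∧
        max (hausdorffDist (range f) (range g)) (hausdorffDist (f '' A) (g '' B)) = r} ≤ ε ↔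
      ∃ R : Set (X × Y),
        (∀ x : X, ∃ y : Y, (x, y) ∈ R) ∧ (∀ y : Y, ∃ x : X, (x, y) ∈ R) ∧
        (∀ p ∈ R, ∀ q ∈ R, |dist p.1 q.1 - dist p.2 q.2| ≤ 2 * ε) ∧
        (∀ a ∈ A, ∃ b ∈ B, (a, b) ∈ R) ∧ (∀ b ∈ B, ∃ a ∈ A, (a, b) ∈ R) := by
  have : Nonempty X := ⟨hAne.some⟩
  constructor
  · intro (h : sInf (embeddingCosts A B) ≤ ε)
    obtain ⟨R, hR, hdis, hAB⟩ := exists_correspondence_distortionLE_two_mul_sInf hA hB hAne hBne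
    rw [isCorrespondenceBetween_univ_iff] at hR
    exact ⟨R, hR.1, hR.2, hdis.mono (by linarith), hAB⟩
  · rintro ⟨R, hX, hY, hdis, hAB⟩
    refine le_of_forall_pos_le_add fun δ hδ => csInf_embeddingCosts_le
      (isCorrespondenceBetween_univ_iff.2 ⟨hX, hY⟩) hAB (by linarith) ?_
    exact DistortionLE.mono (c := 2 * ε) hdis (by linarith)
end

section
/- Let X, Y be compact metric spaces and φ : X → Ξ, ψ : Y → Ξ continuous functions into a metric space Ξ. Then inf over all metric spaces Z and isometric embeddings f : X → Z, g : Y → Z of max( d_H(f(X), g(Y)), d_H(F(gr φ), G(gr ψ)) ) equals inf over all correspondences R between X and Y of max( (1/2) dis(R), sup_{(x,y)∈R} d(φ(x), ψ(y)) ), where F(x,ξ) = (f(x),ξ), G(y,ξ) = (g(y),ξ), gr φ = {(x,φ(x)) : x ∈ X}, and the Hausdorff distance of graphs is taken in Z × Ξ with the max product metric. -/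
open Metric Set

private lemma eps_le_aux {a b : ℝ} (h : ∀ ε : ℝ, 0 < ε → a ≤ b + ε) : a ≤ b := by
  by_contra h'
  push_neg at h'
  have := h ((a - b) / 2) (by linarith)
  linarith

/-- The marked-graph Gromov-Hausdorff distance between compact spaces equipped with
continuous functions to `Ξ` coincides with the Duquesne–Le Gall-type distance defined via
correspondences: the infimum over embeddings of
`max(d_H(f(X), g(Y)), d_H(F(gr φ), G(gr ψ)))` equals the infimum over correspondences `R`
of `max(½ dis R, sup_{(x,y)∈R} d(φ x, ψ y))`. -/
theorem stmt_15 (X Y Ξ : Type) [MetricSpace X] [CompactSpace X] [MetricSpace Y] [CompactSpace Y]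
    [MetricSpace Ξ] (φ : X → Ξ) (ψ : Y → Ξ) (hφ : Continuous φ) (hψ : Continuous ψ) :
    sInf {r : ℝ | ∃ (Z : Type) (_ : MetricSpace Z) (f : X → Z) (g : Y → Z),
        Isometry f ∧ Isometry g ∧
        max (hausdorffDist (range f) (range g))
          (hausdorffDist (range (fun x => (f x, φ x) : X → Z × Ξ))
            (range (fun y => (g y, ψ y) : Y → Z × Ξ))) = r} =
      sInf {r : ℝ | 0 ≤ r ∧ ∃ R : Set (X × Y),
        (∀ x : X, ∃ y : Y, (x, y) ∈ R) ∧ (∀ y : Y, ∃ x : X, (x, y) ∈ R) ∧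
        (∀ p ∈ R, ∀ q ∈ R, |dist p.1 q.1 - dist p.2 q.2| ≤ 2 * r) ∧
        (∀ p ∈ R, dist (φ p.1) (ψ p.2) ≤ r)} := by
  set A := {r : ℝ | ∃ (Z : Type) (_ : MetricSpace Z) (f : X → Z) (g : Y → Z),
        Isometry f ∧ Isometry g ∧
        max (hausdorffDist (range f) (range g))
          (hausdorffDist (range (fun x => (f x, φ x) : X → Z × Ξ))
            (range (fun y => (g y, ψ y) : Y → Z × Ξ))) = r} with hAdef
  set B := {r : ℝ | 0 ≤ r ∧ ∃ R : Set (X × Y),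
        (∀ x : X, ∃ y : Y, (x, y) ∈ R) ∧ (∀ y : Y, ∃ x : X, (x, y) ∈ R) ∧
        (∀ p ∈ R, ∀ q ∈ R, |dist p.1 q.1 - dist p.2 q.2| ≤ 2 * r) ∧
        (∀ p ∈ R, dist (φ p.1) (ψ p.2) ≤ r)} with hBdef
  rcases isEmpty_or_nonempty X with hX | hX
  · -- X empty : A = {0}
    have hA : A = {0} := by
      ext r
      constructor
      · rintro ⟨Z, mZ, f, g, hf, hg, h⟩
        have h1 : range f = ∅ := range_eq_empty f
        have h2 : range (fun x => (f x, φ x) : X → Z × Ξ) = ∅ := range_eq_empty _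
        rw [h1, h2, hausdorffDist_empty', hausdorffDist_empty', max_self] at h
        simpa using h.symm
      · rintro rfl
        refine ⟨Y, inferInstance, fun x => isEmptyElim x, id, fun x => isEmptyElim x,
          isometry_id, ?_⟩
        have h1 : range (fun x => isEmptyElim x : X → Y) = ∅ := range_eq_empty _
        have h2 : range (fun x => ((isEmptyElim x : Y), φ x) : X → Y × Ξ) = ∅ := range_eq_empty _
        rw [h1, h2, hausdorffDist_empty', hausdorffDist_empty', max_self]
    rcases isEmpty_or_nonempty Y with hY | hY
    · -- both empty : B = Ici 0
      have hB : B = Ici 0 := by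
        ext r
        constructor
        · rintro ⟨h0, -⟩; exact h0
        · intro h0
          exact ⟨h0, ∅, fun x => isEmptyElim x, fun y => isEmptyElim y,
            fun p hp => absurd hp (notMem_empty p), fun p hp => absurd hp (notMem_empty p)⟩
      rw [hA, hB, csInf_singleton, csInf_Ici]
    · -- X empty, Y nonempty : B = ∅
      have hB : B = ∅ := by
        ext r
        simp only [mem_empty_iff_false, iff_false]
        rintro ⟨-, R, -, hR2, -, -⟩
        obtain ⟨x, -⟩ := hR2 hY.some
        exact isEmptyElim x
      rw [hA, hB, csInf_singleton, Real.sInf_empty]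
  rcases isEmpty_or_nonempty Y with hY | hY
  · -- Y empty, X nonempty
    have hA : A = {0} := by
      ext r
      constructor
      · rintro ⟨Z, mZ, f, g, hf, hg, h⟩
        have h1 : range g = ∅ := range_eq_empty g
        have h2 : range (fun y => (g y, ψ y) : Y → Z × Ξ) = ∅ := range_eq_empty _
        rw [h1, h2, hausdorffDist_empty, hausdorffDist_empty, max_self] at h
        simpa using h.symm
      · rintro rfl
        refine ⟨X, inferInstance, id, fun y => isEmptyElim y, isometry_id,
          fun y => isEmptyElim y, ?_⟩
        have h1 : range (fun y => isEmptyElim y : Y → X) = ∅ := range_eq_empty _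
        have h2 : range (fun y => ((isEmptyElim y : X), ψ y) : Y → X × Ξ) = ∅ := range_eq_empty _
        rw [h1, h2, hausdorffDist_empty, hausdorffDist_empty, max_self]
    have hB : B = ∅ := by
      ext r
      simp only [mem_empty_iff_false, iff_false]
      rintro ⟨-, R, hR1, -, -, -⟩
      obtain ⟨y, -⟩ := hR1 hX.some
      exact isEmptyElim y
    rw [hA, hB, csInf_singleton, Real.sInf_empty]
  -- main case : both nonempty
  -- Claim 1: from a correspondence, build an embedding
  have claim1 : ∀ b ∈ B, ∀ ε : ℝ, 0 < ε → ∃ a ∈ A, a ≤ b + ε := by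
    rintro b ⟨hb0, R, hR1, hR2, hdis, hφψ⟩ ε hε
    obtain ⟨y0, hy0⟩ := hR1 hX.some
    haveI : Nonempty R := ⟨⟨(hX.some, y0), hy0⟩⟩
    set Φ : R → X := fun p => p.1.1 with hΦ
    set Ψ : R → Y := fun p => p.1.2 with hΨ
    have hεpos : 0 < b + ε := add_pos_of_nonneg_of_pos hb0 hε
    have H : ∀ p q : R, |dist (Φ p) (Φ q) - dist (Ψ p) (Ψ q)| ≤ 2 * (b + ε) := by
      intro p q
      have := hdis p.1 p.2 q.1 q.2
      have h2 : 2 * b ≤ 2 * (b + ε) := by linarith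
      exact le_trans this h2
    letI m : MetricSpace (X ⊕ Y) := glueMetricApprox Φ Ψ (b + ε) hεpos H
    have hdistR : ∀ x y, (x, y) ∈ R → dist (Sum.inl x : X ⊕ Y) (Sum.inr y) = b + ε := by
      intro x y hxy
      exact glueDist_glued_points Φ Ψ (b + ε) ⟨(x, y), hxy⟩
    have hfl : Isometry (Sum.inl : X → X ⊕ Y) := Isometry.of_dist_eq fun _ _ => rfl
    have hfr : Isometry (Sum.inr : Y → X ⊕ Y) := Isometry.of_dist_eq fun _ _ => rfl
    have hd1 : hausdorffDist (range (Sum.inl : X → X ⊕ Y)) (range (Sum.inr : Y → X ⊕ Y))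
        ≤ b + ε := by
      apply hausdorffDist_le_of_mem_dist hεpos.le
      · rintro z ⟨x, rfl⟩
        obtain ⟨y, hy⟩ := hR1 x
        exact ⟨Sum.inr y, mem_range_self y, le_of_eq (hdistR x y hy)⟩
      · rintro z ⟨y, rfl⟩
        obtain ⟨x, hx⟩ := hR2 y
        refine ⟨Sum.inl x, mem_range_self x, ?_⟩
        rw [dist_comm]
        exact le_of_eq (hdistR x y hx)
    have hd2 : hausdorffDist
        (range (fun x => ((Sum.inl x : X ⊕ Y), φ x)))
        (range (fun y => ((Sum.inr y : X ⊕ Y), ψ y))) ≤ b + ε := by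
      apply hausdorffDist_le_of_mem_dist hεpos.le
      · rintro z ⟨x, rfl⟩
        obtain ⟨y, hy⟩ := hR1 x
        refine ⟨(Sum.inr y, ψ y), mem_range_self y, ?_⟩
        rw [Prod.dist_eq]
        apply max_le (le_of_eq (hdistR x y hy))
        calc dist (φ x) (ψ y) ≤ b := hφψ (x, y) hy
          _ ≤ b + ε := by linarith
      · rintro z ⟨y, rfl⟩
        obtain ⟨x, hx⟩ := hR2 y
        refine ⟨(Sum.inl x, φ x), mem_range_self x, ?_⟩
        rw [Prod.dist_eq, dist_comm (Sum.inr y) (Sum.inl x), dist_comm (ψ y) (φ x)]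
        apply max_le (le_of_eq (hdistR x y hx))
        calc dist (φ x) (ψ y) ≤ b := hφψ (x, y) hx
          _ ≤ b + ε := by linarith
    exact ⟨_, ⟨X ⊕ Y, m, Sum.inl, Sum.inr, hfl, hfr, rfl⟩, max_le hd1 hd2⟩
  -- Claim 2: from an embedding, build a correspondence
  have claim2 : ∀ a ∈ A, ∀ ε : ℝ, 0 < ε → a + ε ∈ B := by
    rintro a ⟨Z, mZ, f, g, hf, hg, rfl⟩ ε hε
    set F : X → Z × Ξ := fun x => (f x, φ x) with hF
    set G : Y → Z × Ξ := fun y => (g y, ψ y) with hG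
    set a := max (hausdorffDist (range f) (range g))
      (hausdorffDist (range F) (range G)) with ha
    have ha0 : 0 ≤ a := le_max_of_le_left hausdorffDist_nonneg
    have hFc : Continuous F := (hf.continuous.prodMk hφ)
    have hGc : Continuous G := (hg.continuous.prodMk hψ)
    have hne : EMetric.hausdorffEdist (range F) (range G) ≠ ⊤ :=
      hausdorffEdist_ne_top_of_nonempty_of_bounded (range_nonempty F) (range_nonempty G)
        (isCompact_range hFc).isBounded (isCompact_range hGc).isBounded
    have hlt : hausdorffDist (range F) (range G) < a + ε :=
      lt_of_le_of_lt (le_max_right _ _) (by linarith)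
    refine ⟨by linarith, {p : X × Y | dist (F p.1) (G p.2) ≤ a + ε}, ?_, ?_, ?_, ?_⟩
    · intro x
      obtain ⟨z, ⟨y, rfl⟩, hz⟩ := exists_dist_lt_of_hausdorffDist_lt (mem_range_self x) hlt hne
      exact ⟨y, hz.le⟩
    · intro y
      obtain ⟨z, ⟨x, rfl⟩, hz⟩ := exists_dist_lt_of_hausdorffDist_lt' (mem_range_self y) hlt hne
      exact ⟨x, by simpa [dist_comm] using hz.le⟩
    · rintro ⟨x, y⟩ hp ⟨x', y'⟩ hq
      simp only [mem_setOf_eq] at hp hq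
      have h1 : dist (f x) (g y) ≤ a + ε :=
        le_trans (by rw [Prod.dist_eq]; exact le_max_left _ _) hp
      have h2 : dist (f x') (g y') ≤ a + ε :=
        le_trans (by rw [Prod.dist_eq]; exact le_max_left _ _) hq
      have h3 : |dist (f x) (f x') - dist (g y) (g y')| ≤ dist (f x) (g y) + dist (f x') (g y') := by
        have := dist_dist_dist_le (f x) (f x') (g y) (g y')
        rwa [Real.dist_eq] at this
      rw [← hf.dist_eq x x', ← hg.dist_eq y y']
      calc |dist (f x) (f x') - dist (g y) (g y')| ≤ dist (f x) (g y) + dist (f x') (g y') := h3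
        _ ≤ 2 * (a + ε) := by linarith
    · rintro ⟨x, y⟩ hp
      simp only [mem_setOf_eq] at hp
      exact le_trans (le_trans (by rw [Prod.dist_eq]; exact le_max_right _ _) hp) le_rfl
  -- B is nonempty
  have hbdd : Bornology.IsBounded (range φ ∪ range ψ) :=
    ((isCompact_range hφ).union (isCompact_range hψ)).isBounded
  set b₀ : ℝ := diam (univ : Set X) + diam (univ : Set Y) + diam (range φ ∪ range ψ) with hb₀
  have hb₀0 : 0 ≤ b₀ := by positivity
  have hb₀B : b₀ ∈ B := by
    refine ⟨hb₀0, univ, fun x => ⟨hY.some, mem_univ _⟩, fun y => ⟨hX.some, mem_univ _⟩, ?_, ?_⟩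
    · rintro ⟨x, y⟩ - ⟨x', y'⟩ -
      have h1 : dist x x' ≤ diam (univ : Set X) :=
        dist_le_diam_of_mem isBounded_of_compactSpace (mem_univ _) (mem_univ _)
      have h2 : dist y y' ≤ diam (univ : Set Y) :=
        dist_le_diam_of_mem isBounded_of_compactSpace (mem_univ _) (mem_univ _)
      have h3 : (0:ℝ) ≤ diam (range φ ∪ range ψ) := diam_nonneg
      rw [abs_sub_le_iff]
      constructor <;> simp only [] <;>
        [skip; skip] <;>
        nlinarith [dist_nonneg (x := x) (y := x'), dist_nonneg (x := y) (y := y')]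
    · rintro ⟨x, y⟩ -
      have h := dist_le_diam_of_mem hbdd (mem_union_left _ (mem_range_self x))
        (mem_union_right _ (mem_range_self y))
      have d1 : (0:ℝ) ≤ diam (univ : Set X) := diam_nonneg
      have d2 : (0:ℝ) ≤ diam (univ : Set Y) := diam_nonneg
      simp only [hb₀]
      linarith
  have hAne : A.Nonempty := by
    obtain ⟨a, ha, -⟩ := claim1 b₀ hb₀B 1 one_pos
    exact ⟨a, ha⟩
  have hAbdd : BddBelow A := by
    refine ⟨0, ?_⟩
    rintro a ⟨Z, mZ, f, g, hf, hg, rfl⟩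
    exact le_max_of_le_left hausdorffDist_nonneg
  have hBbdd : BddBelow B := ⟨0, fun b hb => hb.1⟩
  apply le_antisymm
  · refine le_csInf ⟨b₀, hb₀B⟩ fun b hb => ?_
    apply eps_le_aux
    intro ε hε
    obtain ⟨a, haA, hab⟩ := claim1 b hb ε hε
    exact le_trans (csInf_le hAbdd haA) hab
  · refine le_csInf hAne fun a ha => ?_
    apply eps_le_aux
    intro ε hε
    exact csInf_le hBbdd (claim2 a ha ε hε)
end

section
/- Let A be a family of compact metric spaces that is uniformly totally bounded: there is D < ∞ with diam(X) ≤ D for all X ∈ A, and for every ε > 0 there is N(ε) < ∞ such that every X ∈ A can be covered by N(ε) balls of radius ε. Suppose each X ∈ A carries a finite Borel measure μ_X with μ_X(X) ≤ M for a uniform constant M. Then the family {(X, μ_X) : X ∈ A} is precompact in the Gromov-Hausdorff-Prokhorov metric: every sequence has a subsequence converging to some compact measured metric space. -/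
open Metric Set MeasureTheory Filter
open scoped ENNReal

/-- The Gromov-Hausdorff-Prokhorov distance between compact measured metric spaces. -/
noncomputable def ghpDist (X Y : Type) [MetricSpace X] [CompactSpace X] [MeasurableSpace X]
    [MetricSpace Y] [CompactSpace Y] [MeasurableSpace Y] (μ : Measure X) (ν : Measure Y) : ℝ :=
  sInf {r : ℝ | ∃ (Z : Type) (_ : MetricSpace Z) (_ : CompactSpace Z)
    (_ : MeasurableSpace Z) (_ : BorelSpace Z) (f : X → Z) (g : Y → Z),
    Isometry f ∧ Isometry g ∧ Measurable f ∧ Measurable g ∧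
    max (hausdorffDist (range f) (range g))
      (levyProkhorovDist (μ.map f) (ν.map g)) = r}

open scoped NNReal Topology

/-!
Pass to a subsequence converging in the Gromov-Hausdorff sense to a compact space `Y` (Gromov's
compactness criterion). In the optimal coupling of `X n` and `Y` every point of `X n` lies within
`d_GH + ε` of `Y`, and a measurable map `gₙ : X n → Y` with finitely many values realises this, so
the image measure `gₙ_* μₙ` on `Y` is Lévy-Prokhorov-close to `μₙ` in the coupling. On the fixed
compact space `Y`, the measures `gₙ_* μₙ` have mass at most `M`; writing each one as its mass times
a probability measure, a further subsequence converges by compactness of `[0, M]` and of the space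
of probability measures on `Y`, and the Lévy-Prokhorov distance metrizes that convergence.
If infinitely many `X n` are empty, they are at distance `0` from a point with the zero measure.
-/

section LevyProkhorov

variable {Ω : Type*} [MeasurableSpace Ω] [PseudoMetricSpace Ω]

lemma levyProkhorovEDist_map_map_le [OpensMeasurableSpace Ω] {α : Type*} [MeasurableSpace α]
    (μ : Measure α) {f g : α → Ω} (hf : Measurable f) (hg : Measurable g) {r : ℝ}
    (hfg : ∀ a, dist (f a) (g a) ≤ r) :
    levyProkhorovEDist (μ.map f) (μ.map g) ≤ ENNReal.ofReal r := by
  have key : ∀ {f g : α → Ω}, Measurable f → Measurable g → (∀ a, dist (f a) (g a) ≤ r) →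
      ∀ ε : ℝ≥0∞, ENNReal.ofReal r < ε → ε < ⊤ → ∀ B, MeasurableSet B →
        μ.map f B ≤ μ.map g (thickening ε.toReal B) + ε := by
    intro f g hf hg hfg ε hε hεtop B hB
    have hr : r < ε.toReal := (le_max_left r 0).trans_lt <|
      ENNReal.toReal_ofReal' (r := r) ▸ ENNReal.toReal_strict_mono hεtop.ne hε
    rw [Measure.map_apply hf hB, Measure.map_apply hg isOpen_thickening.measurableSet]
    refine le_add_right (measure_mono fun a ha => mem_thickening_iff.2 ⟨f a, ha, ?_⟩)
    rw [dist_comm]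
    exact (hfg a).trans_lt hr
  refine levyProkhorovEDist_le_of_forall _ _ _ fun ε B hε hεtop hB =>
    ⟨key hf hg hfg ε hε hεtop B hB,
      key hg hf (fun a => dist_comm (f a) (g a) ▸ hfg a) ε hε hεtop B hB⟩

lemma levyProkhorovEDist_map_le {Ω' : Type*} [MeasurableSpace Ω'] [PseudoMetricSpace Ω']
    [OpensMeasurableSpace Ω'] {f : Ω → Ω'} (hf : Isometry f) (hfm : Measurable f)
    (μ ν : Measure Ω) :
    levyProkhorovEDist (μ.map f) (ν.map f) ≤ levyProkhorovEDist μ ν := by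
  have key : ∀ (μ ν : Measure Ω) ε, levyProkhorovEDist μ ν < ε → ∀ B, MeasurableSet B →
      μ.map f B ≤ ν.map f (thickening ε.toReal B) + ε := by
    intro μ ν ε hε B hB
    rw [Measure.map_apply hfm hB, Measure.map_apply hfm isOpen_thickening.measurableSet]
    refine (left_measure_le_of_levyProkhorovEDist_lt hε (hfm hB)).trans
      (add_le_add_left (measure_mono fun a ha => ?_) _)
    obtain ⟨b, hb, hab⟩ := mem_thickening_iff.1 ha
    exact mem_thickening_iff.2 ⟨f b, hb, by rwa [hf.dist_eq]⟩
  refine levyProkhorovEDist_le_of_forall _ _ _ fun ε B hε _ hB =>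
    ⟨key μ ν ε hε B hB, key ν μ ε (levyProkhorovEDist_comm μ ν ▸ hε) B hB⟩

lemma levyProkhorovEDist_smul_le (c : ℝ≥0) (μ ν : Measure Ω) :
    levyProkhorovEDist (c • μ) (c • ν) ≤ max 1 c * levyProkhorovEDist μ ν := by
  set C : ℝ≥0∞ := max 1 (c : ℝ≥0∞)
  have hC0 : C ≠ 0 := (zero_lt_one.trans_le (le_max_left _ _)).ne'
  have hCtop : C ≠ ⊤ := by simp [C]
  have key : ∀ (μ ν : Measure Ω) ε, C * levyProkhorovEDist μ ν < ε → ε < ⊤ → ∀ B,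
      MeasurableSet B → (c • μ) B ≤ (c • ν) (thickening ε.toReal B) + ε := by
    intro μ ν ε hε hεtop B hB
    have hlt : levyProkhorovEDist μ ν < ε / C := by
      rwa [ENNReal.lt_div_iff_mul_lt (Or.inl hC0) (Or.inl hCtop), mul_comm]
    have hle : ε / C ≤ ε := ENNReal.div_le_of_le_mul (le_mul_of_one_le_right' (le_max_left _ _))
    have hmul : (c : ℝ≥0∞) * (ε / C) ≤ ε :=
      (mul_le_mul_left (le_max_right _ _) _).trans (ENNReal.mul_div_cancel hC0 hCtop).le
    calc (c • μ) B = c * μ B := Measure.nnreal_smul_coe_apply c μ B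
      _ ≤ c * (ν (thickening (ε / C).toReal B) + ε / C) := by
        gcongr
        exact left_measure_le_of_levyProkhorovEDist_lt hlt hB
      _ ≤ c * ν (thickening ε.toReal B) + ε := by
        rw [mul_add]
        gcongr
        exact hεtop.ne
      _ = (c • ν) (thickening ε.toReal B) + ε := rfl
  refine levyProkhorovEDist_le_of_forall _ _ _ fun ε B hε hεtop hB =>
    ⟨key μ ν ε hε hεtop B hB, key ν μ ε (levyProkhorovEDist_comm μ ν ▸ hε) hεtop B hB⟩

lemma levyProkhorovEDist_smul_smul_le (a b : ℝ≥0) (μ : Measure Ω) :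
    levyProkhorovEDist (a • μ) (b • μ) ≤ edist a b * μ univ := by
  have key : ∀ a b : ℝ≥0, ∀ ε, edist a b * μ univ < ε → ε < ⊤ → ∀ B, MeasurableSet B →
      (a • μ) B ≤ (b • μ) (thickening ε.toReal B) + ε := by
    intro a b ε hε hεtop B hB
    calc (a • μ) B = a * μ B := Measure.nnreal_smul_coe_apply a μ B
      _ ≤ (b + edist a b) * μ B := by
        gcongr
        rw [edist_nndist]
        exact_mod_cast NNReal.le_add_nndist a b
      _ ≤ b * μ (thickening ε.toReal B) + ε := by
        rw [add_mul]
        gcongr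
        · exact self_subset_thickening (ENNReal.toReal_pos (pos_of_gt hε).ne' hεtop.ne) B
        · exact (by gcongr; exact subset_univ B : edist a b * μ B ≤ _).trans hε.le
      _ = (b • μ) (thickening ε.toReal B) + ε := rfl
  refine levyProkhorovEDist_le_of_forall _ _ _ fun ε B hε hεtop hB =>
    ⟨key a b ε hε hεtop B hB, key b a ε (edist_comm a b ▸ hε) hεtop B hB⟩

end LevyProkhorov

section WeakCompactness

variable {Y : Type*} [MeasurableSpace Y]

lemma tendsto_levyProkhorovEDist_smul [PseudoMetricSpace Y] [TopologicalSpace.SeparableSpace Y]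
    [OpensMeasurableSpace Y] {ι : Type*} {l : Filter ι} {P : ι → ProbabilityMeasure Y}
    {P₀ : ProbabilityMeasure Y} {m : ι → ℝ≥0} {m₀ : ℝ≥0} (hP : Tendsto P l (𝓝 P₀))
    (hm : Tendsto m l (𝓝 m₀)) :
    Tendsto (fun i => levyProkhorovEDist (m i • (P i : Measure Y)) (m₀ • (P₀ : Measure Y)))
      l (𝓝 0) := by
  have hPLP : Tendsto (fun i => levyProkhorovEDist (P i : Measure Y) P₀) l (𝓝 0) :=
    tendsto_iff_edist_tendsto_0.1
      ((LevyProkhorov.continuous_ofMeasure_probabilityMeasure.tendsto P₀).comp hP)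
  have hmax : Tendsto (fun i => max 1 (m i : ℝ≥0∞)) l (𝓝 (max 1 m₀)) :=
    tendsto_const_nhds.max ((ENNReal.continuous_coe.tendsto m₀).comp hm)
  have hbound : Tendsto (fun i => max 1 (m i : ℝ≥0∞) * levyProkhorovEDist (P i : Measure Y) P₀
      + edist (m i) m₀ * (P₀ : Measure Y) univ) l (𝓝 0) := by
    simpa using (ENNReal.Tendsto.mul hmax (Or.inr ENNReal.zero_ne_top) hPLP
      (Or.inr (by simp))).add (ENNReal.Tendsto.mul_const (tendsto_iff_edist_tendsto_0.1 hm)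
      (Or.inr (measure_ne_top (P₀ : Measure Y) univ)))
  refine tendsto_of_tendsto_of_tendsto_of_le_of_le tendsto_const_nhds hbound (fun _ => zero_le)
    fun i => ?_
  exact (levyProkhorovEDist_triangle _ (m i • (P₀ : Measure Y)) _).trans
    (add_le_add (levyProkhorovEDist_smul_le _ _ _) (levyProkhorovEDist_smul_smul_le _ _ _))

lemma exists_subseq_tendsto_levyProkhorovEDist [MetricSpace Y] [CompactSpace Y] [Nonempty Y]
    [BorelSpace Y] (ϑ : ℕ → Measure Y) [∀ k, IsFiniteMeasure (ϑ k)] {M : ℝ≥0}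
    (hM : ∀ k, ϑ k univ ≤ M) :
    ∃ ψ : ℕ → ℕ, StrictMono ψ ∧ ∃ ν : Measure Y, IsFiniteMeasure ν ∧
      Tendsto (fun k => levyProkhorovEDist (ϑ (ψ k)) ν) atTop (𝓝 0) := by
  set μ : ℕ → FiniteMeasure Y := fun k => ⟨ϑ k, inferInstance⟩
  have hϑ : ∀ k, ϑ k = (μ k).mass • ((μ k).normalize : Measure Y) := fun k =>
    congrArg FiniteMeasure.toMeasure (μ k).self_eq_mass_smul_normalize
  have hmass : ∀ k, (μ k).mass ∈ Icc 0 M := fun k =>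
    ⟨zero_le, ENNReal.coe_le_coe.1 (FiniteMeasure.ennreal_mass.trans_le (hM k))⟩
  obtain ⟨⟨P₀, m₀⟩, -, ψ, hψ, hlim⟩ := (isCompact_univ.prod isCompact_Icc).tendsto_subseq
    (x := fun k => ((μ k).normalize, (μ k).mass)) fun k => ⟨mem_univ _, hmass k⟩
  refine ⟨ψ, hψ, m₀ • (P₀ : Measure Y), inferInstance, ?_⟩
  simp_rw [hϑ]
  exact tendsto_levyProkhorovEDist_smul hlim.fst_nhds hlim.snd_nhds

end WeakCompactness

open GromovHausdorff

lemma exists_simpleFunc_dist_lt (X : Type*) [PseudoMetricSpace X] [CompactSpace X] [Nonempty X]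
    [MeasurableSpace X] [OpensMeasurableSpace X] {ε : ℝ} (hε : 0 < ε) :
    ∃ n : SimpleFunc X X, ∀ x, dist (n x) x < ε := by
  set e := TopologicalSpace.denseSeq X
  obtain ⟨t, ht⟩ := isCompact_univ.elim_finite_subcover (fun k => ball (e k) ε)
    (fun _ => isOpen_ball) fun x _ =>
      mem_iUnion.2 (Metric.denseRange_iff.1 (TopologicalSpace.denseRange_denseSeq X) x ε hε)
  refine ⟨SimpleFunc.nearestPt e (t.sup id), fun x => ?_⟩
  obtain ⟨k, hk, hxk⟩ := mem_iUnion₂.1 (ht (mem_univ x))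
  have := SimpleFunc.edist_nearestPt_le e x (Finset.le_sup (f := id) hk)
  rw [edist_dist, edist_dist, ENNReal.ofReal_le_ofReal_iff dist_nonneg] at this
  exact this.trans_lt (dist_comm x (e k) ▸ mem_ball.1 hxk)

section GHP

variable {X Y : Type} [MetricSpace X] [CompactSpace X] [MeasurableSpace X]
  [MetricSpace Y] [CompactSpace Y] [MeasurableSpace Y]

lemma ghpDist_nonneg (μ : Measure X) (ν : Measure Y) : 0 ≤ ghpDist X Y μ ν :=
  Real.sInf_nonneg fun _ ⟨_, _, _, _, _, _, _, _, _, _, _, h⟩ =>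
    h ▸ le_max_of_le_left hausdorffDist_nonneg

lemma ghpDist_le {Z : Type} [MetricSpace Z] [CompactSpace Z] [MeasurableSpace Z] [BorelSpace Z]
    {f : X → Z} {g : Y → Z} (hf : Isometry f) (hg : Isometry g) (hfm : Measurable f)
    (hgm : Measurable g) (μ : Measure X) (ν : Measure Y) :
    ghpDist X Y μ ν ≤
      max (hausdorffDist (range f) (range g)) (levyProkhorovDist (μ.map f) (ν.map g)) :=
  csInf_le ⟨0, fun _ ⟨_, _, _, _, _, _, _, _, _, _, _, h⟩ =>
      h ▸ le_max_of_le_left hausdorffDist_nonneg⟩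
    ⟨Z, inferInstance, inferInstance, inferInstance, inferInstance, f, g, hf, hg, hfm, hgm, rfl⟩

/-- Here `hausdorffDist ∅ s = 0` by convention. -/
lemma ghpDist_zero_right_of_isEmpty [IsEmpty X] [BorelSpace Y] (μ : Measure X) :
    ghpDist X Y μ 0 = 0 := by
  refine le_antisymm ((ghpDist_le (f := isEmptyElim) isometry_subsingleton isometry_id
    (measurable_of_empty _) measurable_id μ 0).trans_eq ?_) (ghpDist_nonneg μ 0)
  rw [range_eq_empty, hausdorffDist_comm, hausdorffDist_empty, Measure.eq_zero_of_isEmpty μ,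
    Measure.map_zero, Measure.map_zero, levyProkhorovDist_self, max_self]

variable [Nonempty X] [Nonempty Y] [OpensMeasurableSpace X]

lemma exists_measurable_dist_optimalGHInj_lt {ε : ℝ} (hε : 0 < ε) :
    ∃ g : X → Y, Measurable g ∧
      ∀ x, dist (optimalGHInjl X Y x) (optimalGHInjr X Y (g x)) < ghDist X Y + ε := by
  have hclose : ∀ x, ∃ y, dist (optimalGHInjl X Y x) (optimalGHInjr X Y y) < ghDist X Y + ε / 2 :=
    fun x => by
    obtain ⟨_, ⟨y, rfl⟩, hy⟩ := exists_dist_lt_of_hausdorffDist_lt (mem_range_self x)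
      (hausdorffDist_optimal.trans_lt (lt_add_of_pos_right _ (half_pos hε)))
      (hausdorffEDist_ne_top_of_nonempty_of_bounded (range_nonempty _) (range_nonempty _)
        (isCompact_range (isometry_optimalGHInjl X Y).continuous).isBounded
        (isCompact_range (isometry_optimalGHInjr X Y).continuous).isBounded)
    exact ⟨y, hy⟩
  choose h hh using hclose
  -- `h` need not be measurable, but `h ∘ n` is, as `n` takes finitely many values.
  obtain ⟨n, hn⟩ := exists_simpleFunc_dist_lt X (half_pos hε)
  refine ⟨h ∘ n, (n.map h).measurable, fun x => ?_⟩
  calc dist (optimalGHInjl X Y x) (optimalGHInjr X Y (h (n x)))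
      ≤ dist (optimalGHInjl X Y x) (optimalGHInjl X Y (n x))
        + dist (optimalGHInjl X Y (n x)) (optimalGHInjr X Y (h (n x))) := dist_triangle _ _ _
    _ < ε / 2 + (ghDist X Y + ε / 2) := by
      rw [(isometry_optimalGHInjl X Y).dist_eq, dist_comm]
      exact add_lt_add (hn x) (hh (n x))
    _ = ghDist X Y + ε := by ring

lemma ghpDist_le_of_forall_dist_le [OpensMeasurableSpace Y] (μ : Measure X) (ν : Measure Y)
    [IsFiniteMeasure μ] [IsFiniteMeasure ν] {g : X → Y} (hg : Measurable g) {r : ℝ}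
    (hr : ∀ x, dist (optimalGHInjl X Y x) (optimalGHInjr X Y (g x)) ≤ r) :
    ghpDist X Y μ ν ≤ max (ghDist X Y) (r + levyProkhorovDist (μ.map g) ν) := by
  let : MeasurableSpace (OptimalGHCoupling X Y) := borel _
  have : BorelSpace (OptimalGHCoupling X Y) := ⟨rfl⟩
  have hIl := isometry_optimalGHInjl X Y
  have hIr := isometry_optimalGHInjr X Y
  refine (ghpDist_le hIl hIr hIl.continuous.measurable hIr.continuous.measurable μ ν).trans ?_
  rw [hausdorffDist_optimal]
  refine max_le_max le_rfl ?_
  have hmap : (μ.map g).map (optimalGHInjr X Y) = μ.map (optimalGHInjr X Y ∘ g) :=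
    Measure.map_map hIr.continuous.measurable hg
  calc levyProkhorovDist (μ.map (optimalGHInjl X Y)) (ν.map (optimalGHInjr X Y))
      ≤ levyProkhorovDist (μ.map (optimalGHInjl X Y)) ((μ.map g).map (optimalGHInjr X Y))
        + levyProkhorovDist ((μ.map g).map (optimalGHInjr X Y)) (ν.map (optimalGHInjr X Y)) :=
      levyProkhorovDist_triangle _ _ _
    _ ≤ r + levyProkhorovDist (μ.map g) ν := by
      gcongr
      · rw [hmap]
        exact ENNReal.toReal_le_of_le_ofReal (dist_nonneg.trans (hr (Classical.arbitrary X)))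
          (levyProkhorovEDist_map_map_le μ hIl.continuous.measurable
            (hIr.continuous.measurable.comp hg) hr)
      · exact ENNReal.toReal_mono (levyProkhorovEDist_ne_top _ _)
          (levyProkhorovEDist_map_le hIr hIr.continuous.measurable _ _)

end GHP

lemma GromovHausdorff.exists_subseq_tendsto_ghDist (W : ℕ → Type) [∀ n, MetricSpace (W n)]
    [∀ n, CompactSpace (W n)] [∀ n, Nonempty (W n)] {D : ℝ}
    (hD : ∀ n, diam (univ : Set (W n)) ≤ D)
    (hcov : ∀ ε : ℝ, 0 < ε → ∃ N : ℕ, ∀ n, ∃ s : Finset (W n),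
      s.card ≤ N ∧ ∀ x : W n, ∃ y ∈ s, dist x y ≤ ε) :
    ∃ ψ : ℕ → ℕ, StrictMono ψ ∧ ∃ p : GHSpace,
      Tendsto (fun k => ghDist (W (ψ k)) p.Rep) atTop (𝓝 0) := by
  choose N hN using fun m : ℕ => hcov (1 / (m + 2)) (by positivity)
  have hrep : ∀ n, Nonempty ((toGHSpace (W n)).Rep ≃ᵢ W n) := fun n =>
    toGHSpace_eq_toGHSpace_iff_isometryEquiv.1 (GHSpace.toGHSpace_rep _)
  have htb : TotallyBounded (range fun n => toGHSpace (W n)) := by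
    refine totallyBounded (C := D) (K := N) tendsto_one_div_add_atTop_nhds_zero_nat ?_ ?_
    · rintro _ ⟨n, rfl⟩
      obtain ⟨e⟩ := hrep n
      exact e.diam_univ.trans_le (hD n)
    · rintro _ ⟨n, rfl⟩ m
      obtain ⟨e⟩ := hrep n
      obtain ⟨s, hcard, hs⟩ := hN m n
      refine ⟨e.symm '' s, Cardinal.mk_image_le.trans ?_, fun z _ => ?_⟩
      · simpa using hcard
      obtain ⟨y, hy, hzy⟩ := hs (e z)
      refine mem_biUnion (mem_image_of_mem _ hy) (mem_ball.2 ?_)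
      rw [← e.dist_eq, e.apply_symm_apply]
      refine hzy.trans_lt ?_
      gcongr
      norm_num
  obtain ⟨p, -, ψ, hψ, hlim⟩ := (isCompact_iff_totallyBounded_isComplete.2
    ⟨htb.closure, isClosed_closure.isComplete⟩).tendsto_subseq
      fun n => subset_closure (mem_range_self n)
  refine ⟨ψ, hψ, p, ?_⟩
  simp_rw [ghDist, GHSpace.toGHSpace_rep]
  exact tendsto_iff_dist_tendsto_zero.1 hlim

theorem exists_subseq_tendsto_ghpDist_of_nonempty (W : ℕ → Type) [∀ n, MetricSpace (W n)]
    [∀ n, CompactSpace (W n)] [∀ n, Nonempty (W n)] [∀ n, MeasurableSpace (W n)]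
    [∀ n, OpensMeasurableSpace (W n)] (μ : ∀ n, Measure (W n)) {D : ℝ}
    (hD : ∀ n, diam (univ : Set (W n)) ≤ D)
    (hcov : ∀ ε : ℝ, 0 < ε → ∃ N : ℕ, ∀ n, ∃ s : Finset (W n),
      s.card ≤ N ∧ ∀ x : W n, ∃ y ∈ s, dist x y ≤ ε)
    {M : ℝ≥0} (hmass : ∀ n, μ n univ ≤ M) :
    ∃ φ : ℕ → ℕ, StrictMono φ ∧
      ∃ (Y : Type) (_ : MetricSpace Y) (_ : CompactSpace Y) (_ : MeasurableSpace Y)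
        (_ : BorelSpace Y) (ν : Measure Y), IsFiniteMeasure ν ∧
        Tendsto (fun k => ghpDist (W (φ k)) Y (μ (φ k)) ν) atTop (𝓝 0) := by
  have (n : ℕ) : IsFiniteMeasure (μ n) := ⟨(hmass n).trans_lt ENNReal.coe_lt_top⟩
  obtain ⟨ψ₁, hψ₁, p, hgh⟩ := exists_subseq_tendsto_ghDist W hD hcov
  let : MeasurableSpace p.Rep := borel _
  have : BorelSpace p.Rep := ⟨rfl⟩
  choose g hgm hg using fun k : ℕ => exists_measurable_dist_optimalGHInj_lt
    (X := W (ψ₁ k)) (Y := p.Rep) (Nat.one_div_pos_of_nat (n := k))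
  obtain ⟨ψ₂, hψ₂, ν, hν, hLP⟩ := exists_subseq_tendsto_levyProkhorovEDist
    (fun k => (μ (ψ₁ k)).map (g k)) (M := M)
    fun k => (Measure.map_apply (hgm k) MeasurableSet.univ).trans_le (hmass _)
  refine ⟨ψ₁ ∘ ψ₂, hψ₁.comp hψ₂, p.Rep, inferInstance, inferInstance, inferInstance,
    inferInstance, ν, hν, ?_⟩
  have hgh' := hgh.comp hψ₂.tendsto_atTop
  have hεlim : Tendsto (fun k => 1 / ((ψ₂ k : ℝ) + 1)) atTop (𝓝 0) :=
    tendsto_one_div_add_atTop_nhds_zero_nat.comp hψ₂.tendsto_atTop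
  have hLP' := (ENNReal.tendsto_toReal ENNReal.zero_ne_top).comp hLP
  refine squeeze_zero (fun k => ghpDist_nonneg _ _)
    (fun k => ghpDist_le_of_forall_dist_le _ _ (hgm (ψ₂ k)) fun x => (hg (ψ₂ k) x).le) ?_
  simpa [levyProkhorovDist] using hgh'.max ((hgh'.add hεlim).add hLP')

/-- A uniformly totally bounded family of compact metric spaces carrying finite measures of
uniformly bounded total mass is precompact in the Gromov-Hausdorff-Prokhorov metric: every
sequence has a subsequence converging to some compact measured metric space. -/
theorem stmt_16 (X : ℕ → Type)
    (inst : ∀ n, MetricSpace (X n)) (instC : ∀ n, CompactSpace (X n))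
    (instM : ∀ n, MeasurableSpace (X n)) (instB : ∀ n, @BorelSpace (X n) _ (instM n))
    (μ : ∀ n, @Measure (X n) (instM n))
    (D : ℝ) (hD : ∀ n, @Metric.diam (X n) (inst n).toPseudoMetricSpace (Set.univ) ≤ D)
    (hcov : ∀ ε : ℝ, 0 < ε → ∃ N : ℕ, ∀ n, ∃ s : Finset (X n),
      s.card ≤ N ∧ ∀ x : X n, ∃ y ∈ s, @dist (X n) (inst n).toDist x y ≤ ε)
    (M : ℝ≥0∞) (hM : M < ⊤) (hmass : ∀ n, μ n Set.univ ≤ M) :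
    ∃ (φ : ℕ → ℕ), StrictMono φ ∧
      ∃ (Y : Type) (iY : MetricSpace Y) (iYc : CompactSpace Y)
        (iYm : MeasurableSpace Y) (_ : @BorelSpace Y iY.toPseudoMetricSpace.toUniformSpace.toTopologicalSpace iYm)
        (ν : @Measure Y iYm), @IsFiniteMeasure Y iYm ν ∧
        Tendsto (fun k =>
          @ghpDist (X (φ k)) Y (inst (φ k)) (instC (φ k)) (instM (φ k)) iY iYc iYm (μ (φ k)) ν)
          atTop (nhds 0) := by
  by_cases hempty : ∃ᶠ n in atTop, IsEmpty (X n)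
  · obtain ⟨φ, hφ, hφempty⟩ := extraction_of_frequently_atTop hempty
    refine ⟨φ, hφ, PUnit, inferInstance, inferInstance, inferInstance, inferInstance, 0,
      inferInstance, tendsto_const_nhds.congr fun k => ?_⟩
    have := hφempty k
    exact (ghpDist_zero_right_of_isEmpty _).symm
  · obtain ⟨φ, hφ, hφne⟩ := extraction_of_frequently_atTop (not_frequently.1 hempty).frequently
    have (k : ℕ) : Nonempty (X (φ k)) := not_isEmpty_iff.1 (hφne k)
    obtain ⟨ψ, hψ, hlim⟩ := exists_subseq_tendsto_ghpDist_of_nonempty (fun k => X (φ k))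
      (fun k => μ (φ k)) (fun k => hD (φ k))
      (fun ε hε => (hcov ε hε).imp fun _ hN k => hN (φ k)) (M := M.toNNReal)
      fun k => (hmass (φ k)).trans_eq (ENNReal.coe_toNNReal hM.ne).symm
    exact ⟨φ ∘ ψ, hφ.comp hψ, hlim⟩
end

section
/- Define X_m to be the real line ℝ (pointed at 0, with the Lebesgue measure) equipped with the continuous curve η_m : ℝ → ℝ, η_m(t) = min(m, 1/|1−t|). Then for every r > 0 and all m, m' large enough (depending on r), the restrictions of η_m and η_{m'} to the ball B_r(0) agree after stopping at the exit time of the ball, so that (X_m) is a Cauchy sequence with respect to the local Gromov-Hausdorff-uniform distance; however, the sequence (η_m) does not converge uniformly on compact time intervals to any continuous curve ℝ → ℝ defined on all of ℝ. -/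
/-!
For `m > r` the curve `η_m` leaves the ball `B_r(0)` exactly at time `1 - 1/r`, before it
is cut off at height `m`, so the stopped curves do not depend on `m`. On the other hand
`η_m(1) = m` diverges, so there is not even a pointwise limit at `t = 1`.
-/

open Metric Set Filter

noncomputable def etaCurve (m : ℕ) (t : ℝ) : ℝ :=
  if t = 1 then (m : ℝ) else min (m : ℝ) (1 / |1 - t|)

noncomputable def exitTime (m : ℕ) (r : ℝ) : ℝ :=
  sInf {t : ℝ | etaCurve m t ∉ Metric.closedBall (0 : ℝ) r}

lemma min_one_div_eq_div_max {a x : ℝ} (hx : 0 < x) :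
    min a (1 / x) = a / max 1 (a * x) := by
  rcases le_total (a * x) 1 with h | h
  · rw [max_eq_left h, div_one, min_eq_left ((le_div_iff₀ hx).2 (by simpa using h))]
  · have ha : 0 < a := pos_of_mul_pos_left (one_pos.trans_le h) hx.le
    rw [max_eq_right h, min_eq_right ((div_le_iff₀ hx).2 h), div_mul_cancel_left₀ ha.ne',
      one_div]

lemma etaCurve_of_ne_one (m : ℕ) {t : ℝ} (ht : t ≠ 1) :
    etaCurve m t = min (m : ℝ) (1 / |1 - t|) := if_neg ht

@[simp]
lemma etaCurve_one (m : ℕ) : etaCurve m 1 = m := if_pos rfl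

/-- Free of the case split at `t = 1`, this form makes continuity evident. -/
lemma etaCurve_eq_div_max (m : ℕ) (t : ℝ) :
    etaCurve m t = m / max 1 (m * |1 - t|) := by
  rcases eq_or_ne t 1 with rfl | ht
  · simp
  · rw [etaCurve_of_ne_one m ht,
      min_one_div_eq_div_max (abs_pos.2 (sub_ne_zero.2 ht.symm))]

lemma continuous_etaCurve (m : ℕ) : Continuous (etaCurve m) := by
  simp_rw [funext (etaCurve_eq_div_max m)]
  exact continuous_const.div (by fun_prop) fun t => (one_pos.trans_le (le_max_left _ _)).ne'

lemma lt_etaCurve_iff {m : ℕ} {r : ℝ} (hr : 0 < r) (hm : r < m) (t : ℝ) :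
    r < etaCurve m t ↔ |1 - t| < 1 / r := by
  rcases eq_or_ne t 1 with rfl | ht
  · simpa [hr] using hm
  · rw [etaCurve_of_ne_one m ht, lt_min_iff, and_iff_right hm,
      lt_one_div hr (abs_pos.2 (sub_ne_zero.2 ht.symm))]

lemma etaCurve_nonneg (m : ℕ) (t : ℝ) : 0 ≤ etaCurve m t := by
  rw [etaCurve_eq_div_max]
  positivity

lemma exitTime_eq {m : ℕ} {r : ℝ} (hr : 0 < r) (hm : r < m) :
    exitTime m r = 1 - 1 / r := by
  have hexit : {t : ℝ | etaCurve m t ∉ closedBall (0 : ℝ) r} = ball 1 (1 / r) := by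
    ext t
    simp only [mem_ofPred_eq, mem_closedBall, Real.dist_eq, sub_zero,
      abs_of_nonneg (etaCurve_nonneg m t), not_le, lt_etaCurve_iff hr hm, mem_ball, abs_sub_comm]
  rw [exitTime, hexit, Real.ball_eq_Ioo, csInf_Ioo (by linarith [one_div_pos.2 hr])]

lemma etaCurve_eq_one_div_of_le {m : ℕ} {t : ℝ} (ht : t < 1) (hm : 1 / (1 - t) ≤ m) :
    etaCurve m t = 1 / (1 - t) := by
  rw [etaCurve_of_ne_one m ht.ne, abs_of_pos (sub_pos.2 ht), min_eq_right hm]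

lemma etaCurve_min_exitTime {m : ℕ} {r : ℝ} (hr : 0 < r) (hm : r < m) (t : ℝ) :
    etaCurve m (min t (exitTime m r)) = 1 / (1 - min t (1 - 1 / r)) := by
  rw [exitTime_eq hr hm]
  have hle : min t (1 - 1 / r) ≤ 1 - 1 / r := min_le_right _ _
  have hgap : 1 / r ≤ 1 - min t (1 - 1 / r) := by linarith
  refine etaCurve_eq_one_div_of_le (by linarith [one_div_pos.2 hr]) ?_
  calc 1 / (1 - min t (1 - 1 / r)) ≤ r := (one_div_le (by linarith [one_div_pos.2 hr]) hr).2 hgap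
    _ ≤ m := hm.le

/-- The curves `η_m` are continuous; for every radius `r > 0` and all sufficiently large
`m, m'`, the curves `η_m` and `η_{m'}` stopped at their exit times from `B_r(0)` coincide
(so the spaces `X_m = (ℝ, 0, Lebesgue, η_m)` form a Cauchy sequence in the local
Gromov-Hausdorff-uniform distance); yet `(η_m)` does not converge locally uniformly to any
continuous curve `ℝ → ℝ`. -/
theorem stmt_19 :
    (∀ m : ℕ, Continuous (etaCurve m)) ∧
    (∀ r : ℝ, 0 < r → ∃ M : ℕ, ∀ m ≥ M, ∀ m' ≥ M, ∀ t : ℝ,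
      etaCurve m (min t (exitTime m r)) = etaCurve m' (min t (exitTime m' r))) ∧
    ¬ ∃ η : ℝ → ℝ, Continuous η ∧
      TendstoLocallyUniformly (fun m : ℕ => etaCurve m) η atTop := by
  refine ⟨continuous_etaCurve, fun r hr => ?_, ?_⟩
  · obtain ⟨M, hM⟩ := exists_nat_gt r
    refine ⟨M, fun m hm m' hm' t => ?_⟩
    rw [etaCurve_min_exitTime hr (hM.trans_le (by exact_mod_cast hm)),
      etaCurve_min_exitTime hr (hM.trans_le (by exact_mod_cast hm'))]
  · rintro ⟨η, -, hη⟩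
    have hpointwise : Tendsto (fun m : ℕ => etaCurve m 1) atTop (nhds (η 1)) :=
      (tendstoLocallyUniformlyOn_univ.2 hη).tendsto_at (mem_univ 1)
    simp only [etaCurve_one] at hpointwise
    exact not_tendsto_nhds_of_tendsto_atTop tendsto_natCast_atTop_atTop _ hpointwise
end
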